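/- Let d ∈ ℕ, let β : {0,…,d} → ℝ≥0 satisfy β(0) = β(d) = 0, β(i) > 0 for 0 < i < d, and the concavity condition β(i) ≥ (β(i-j)+β(i+j))/2 for all 0 < i < d and 0 < j ≤ min(i, d-i). Let H be a set, let A be a linear operator on real-valued functions on H with A(1) = 1 which is monotone (f ≤ g implies A f ≤ A g), and let f₀,…,f_d : H → ℝ>0 with f₀ = f_d = 1 satisfy A(f_i^{β_i}) ≤ a·f_i^{β_i} + ω^{2β_i} · max_{0<j≤min(d-i,i)} (√(f_{i+j} f_{i-j}))^{β_i} for i = 1,…,d-1, where β_i = 1/β(i) and a, ω > 0. Then for every a' > a there exist constants ω₀,…,ω_d > 0 and C₀ > 1 such that the function f := Σ_{i=0}^{d} (ω_i f_i)^{β_i} satisfies (A f)(h) ≤ a'·f(h) + C₀ for all h ∈ H. -/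

import Mathlib

/-!
Take the weights `ω_k = ρ ^ (k (d - k))` and the summands `g_k = (ω_k f_k) ^ (1 / β_k)`.
Because `k (d - k)` is a concave parabola, `ω_i² = ρ^(2j²) ω_{i+j} ω_{i-j}`, so the cross term of
the `i`-th inequality becomes `(ρ^(2j²) ω⁴ (ω_{i+j} f_{i+j}) (ω_{i-j} f_{i-j})) ^ (1 / (2 β_i))`,
which is at most `ε g_{i+j} ^ (β_{i+j} / (2 β_i)) g_{i-j} ^ (β_{i-j} / (2 β_i))` once `ρ` is small.
Concavity of `β` makes these two exponents sum to at most `1`, so weighted AM-GM bounds the cross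
term by `ε (g_{i+j} + g_{i-j} + 1)`. Summing over `i` gives `A f ≤ (a + 2 (d + 1) ε) f + C`.
-/

open Finset Filter Topology

theorem rpow_mul_rpow_le_add_add_one {u v s t : ℝ} (hu : 0 ≤ u) (hv : 0 ≤ v) (hs : 0 ≤ s)
    (ht : 0 ≤ t) (hst : s + t ≤ 1) : u ^ s * v ^ t ≤ u + v + 1 := by
  have h := Real.geom_mean_le_arith_mean3_weighted hs ht (by linarith : 0 ≤ 1 - s - t) hu hv
    zero_le_one (by ring)
  rw [Real.one_rpow, mul_one] at h
  nlinarith [mul_nonneg (by linarith : 0 ≤ 1 - s) hu, mul_nonneg (by linarith : 0 ≤ 1 - t) hv]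

theorem le_rpow_one_div_rpow {x b : ℝ} (hx : 0 ≤ x) (h : b = 0 → x ≤ 1) :
    x ≤ (x ^ (1 / b)) ^ b := by
  rcases eq_or_ne b 0 with rfl | hb
  · simpa using h rfl
  · rw [one_div, Real.rpow_inv_rpow hx hb]

theorem rpow_mul_rpow_mul_sqrt_rpow {w ω P : ℝ} (hw : 0 ≤ w) (hω : 0 ≤ ω) (hP : 0 ≤ P) (b : ℝ) :
    w ^ (1 / b) * ω ^ (2 * (1 / b)) * √P ^ (1 / b) = (w ^ 2 * ω ^ 4 * P) ^ (1 / (2 * b)) := by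
  have hb : 1 / b = (2 : ℕ) * (1 / (2 * b)) := by push_cast; ring
  have hb' : 2 * (1 / b) = (4 : ℕ) * (1 / (2 * b)) := by push_cast; ring
  rw [Real.mul_rpow (by positivity) hP, Real.mul_rpow (by positivity) (by positivity), hb', hb,
    Real.rpow_natCast_mul hw, Real.rpow_natCast_mul hω, Real.rpow_natCast_mul (Real.sqrt_nonneg P),
    Real.sq_sqrt hP]

theorem rpow_mul_mul_le_mul_add_add_one {b p q x y u v κ ε : ℝ} (hb : 0 < b) (hp : 0 ≤ p)
    (hq : 0 ≤ q) (hpq : p + q ≤ 2 * b) (hx : 0 ≤ x) (hy : 0 ≤ y) (hu : 0 ≤ u) (hv : 0 ≤ v)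
    (hxu : x ≤ u ^ p) (hyv : y ≤ v ^ q) (hκ : 0 ≤ κ) (hε : 0 ≤ ε) (hκε : κ ≤ ε ^ (2 * b)) :
    (κ * (x * y)) ^ (1 / (2 * b)) ≤ ε * (u + v + 1) := by
  set e := 1 / (2 * b) with he
  have he0 : 0 ≤ e := by positivity
  have hκe : κ ^ e ≤ ε := by
    rw [he, one_div, Real.rpow_inv_le_iff_of_pos hκ hε (by positivity)]
    exact hκε
  have hpq' : p * e + q * e ≤ 1 := by
    rw [← add_mul, he, mul_one_div, div_le_one (by positivity)]
    exact hpq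
  calc (κ * (x * y)) ^ e = κ ^ e * (x ^ e * y ^ e) := by
        rw [Real.mul_rpow hκ (by positivity), Real.mul_rpow hx hy]
    _ ≤ ε * (u ^ (p * e) * v ^ (q * e)) := by
        rw [Real.rpow_mul hu, Real.rpow_mul hv]
        gcongr
    _ ≤ ε * (u + v + 1) := by
        gcongr
        exact rpow_mul_rpow_le_add_add_one hu hv (by positivity) (by positivity) hpq'

theorem pow_mul_sub_sq {M : Type*} [CommMonoid M] (ρ : M) {d i j : ℕ} (hji : j ≤ i)
    (hijd : i + j ≤ d) :
    (ρ ^ (i * (d - i))) ^ 2 =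
      ρ ^ (2 * j ^ 2) * (ρ ^ ((i + j) * (d - (i + j))) * ρ ^ ((i - j) * (d - (i - j)))) := by
  rw [← pow_mul, ← pow_add, ← pow_add]
  congr 1
  zify [hji, hijd, show i ≤ d by omega, show i - j ≤ d by omega]
  ring

theorem sum_le_mul_sum_add {ι : Type*} (s : Finset ι) {x y : ι → ℝ} {a a' δ c : ℝ}
    (hx : ∀ i ∈ s, 0 ≤ x i) (hy : ∀ i ∈ s, y i ≤ a * x i + δ * ∑ j ∈ s, x j + c)
    (hδ : #s * δ ≤ a' - a) :
    ∑ i ∈ s, y i ≤ a' * ∑ i ∈ s, x i + #s * c := by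
  have hX : 0 ≤ ∑ i ∈ s, x i := sum_nonneg hx
  calc ∑ i ∈ s, y i ≤ ∑ i ∈ s, (a * x i + δ * ∑ j ∈ s, x j + c) := sum_le_sum hy
    _ = (a + #s * δ) * ∑ i ∈ s, x i + #s * c := by
        rw [sum_add_distrib, sum_add_distrib, ← mul_sum, sum_const, sum_const, nsmul_eq_mul,
          nsmul_eq_mul]
        ring
    _ ≤ a' * ∑ i ∈ s, x i + #s * c := by gcongr; linarith

theorem exists_pos_le_one_forall_mul_le {ι : Type*} (s : Finset ι) (c : ℝ) {y : ι → ℝ}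
    (hy : ∀ i ∈ s, 0 < y i) : ∃ ρ : ℝ, 0 < ρ ∧ ρ ≤ 1 ∧ ∀ i ∈ s, ρ * c ≤ y i := by
  have hlim : Tendsto (fun ρ : ℝ => ρ * c) (𝓝[>] 0) (𝓝 0) :=
    ((continuous_mul_const c).tendsto' 0 0 (zero_mul c)).mono_left nhdsWithin_le_nhds
  have hsmall : ∀ᶠ ρ in 𝓝[>] (0 : ℝ), ∀ i ∈ s, ρ * c ≤ y i :=
    s.eventually_all.2 fun i hi => (hlim.eventually_lt_const (hy i hi)).mono fun _ => le_of_lt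
  have hle : ∀ᶠ ρ in 𝓝[>] (0 : ℝ), ρ ≤ 1 :=
    (eventually_le_nhds one_pos).filter_mono nhdsWithin_le_nhds
  obtain ⟨ρ, hρ0, hρ1, hρ⟩ := (eventually_mem_nhdsWithin.and (hle.and hsmall)).exists
  exact ⟨ρ, hρ0, hρ1, hρ⟩

section HeightFunction

variable {H : Type*}

noncomputable def heightTerm (β w : ℕ → ℝ) (f : ℕ → H → ℝ) (i : ℕ) (h : H) : ℝ :=
  (w i * f i h) ^ (1 / β i)

variable {β w : ℕ → ℝ} {f : ℕ → H → ℝ}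

theorem heightTerm_nonneg {i : ℕ} {h : H} (hw : 0 ≤ w i) (hf : 0 ≤ f i h) :
    0 ≤ heightTerm β w f i h :=
  Real.rpow_nonneg (mul_nonneg hw hf) _

theorem heightTerm_of_eq_zero {i : ℕ} (hβ : β i = 0) : heightTerm β w f i = fun _ => 1 := by
  funext h
  simp [heightTerm, hβ]

theorem apply_heightTerm_le (A : (H → ℝ) →ₗ[ℝ] (H → ℝ)) {i k l : ℕ} {h : H} {a ω κ ε : ℝ}
    (hβi : 0 < β i) (hβk : 0 ≤ β k) (hβl : 0 ≤ β l) (hβ : β k + β l ≤ 2 * β i)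
    (hwi : 0 ≤ w i) (hwk : 0 ≤ w k) (hwl : 0 ≤ w l)
    (hfi : ∀ h', 0 ≤ f i h') (hfk : 0 ≤ f k h) (hfl : 0 ≤ f l h)
    (hk : β k = 0 → w k * f k h ≤ 1) (hl : β l = 0 → w l * f l h ≤ 1)
    (hω : 0 ≤ ω) (hκ : 0 ≤ κ) (hε : 0 ≤ ε) (hw : w i ^ 2 * ω ^ 4 = κ * (w k * w l))
    (hκε : κ ≤ ε ^ (2 * β i))
    (hA : A (fun h' => f i h' ^ (1 / β i)) h ≤
      a * f i h ^ (1 / β i) + ω ^ (2 * (1 / β i)) * √(f k h * f l h) ^ (1 / β i)) :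
    A (heightTerm β w f i) h ≤
      a * heightTerm β w f i h + ε * (heightTerm β w f k h + heightTerm β w f l h + 1) := by
  have hsmul : heightTerm β w f i = w i ^ (1 / β i) • fun h' => f i h' ^ (1 / β i) :=
    funext fun h' => Real.mul_rpow hwi (hfi h')
  have hcross : w i ^ (1 / β i) * (ω ^ (2 * (1 / β i)) * √(f k h * f l h) ^ (1 / β i)) =
      (κ * ((w k * f k h) * (w l * f l h))) ^ (1 / (2 * β i)) := by
    rw [← mul_assoc, rpow_mul_rpow_mul_sqrt_rpow hwi hω (by positivity)]
    congr 1
    linear_combination (f k h * f l h) * hw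
  calc A (heightTerm β w f i) h = w i ^ (1 / β i) * A (fun h' => f i h' ^ (1 / β i)) h := by
        rw [hsmul, map_smul]; rfl
    _ ≤ w i ^ (1 / β i) *
          (a * f i h ^ (1 / β i) + ω ^ (2 * (1 / β i)) * √(f k h * f l h) ^ (1 / β i)) := by
        gcongr
    _ = a * heightTerm β w f i h + (κ * ((w k * f k h) * (w l * f l h))) ^ (1 / (2 * β i)) := by
        rw [mul_add, hcross, heightTerm, Real.mul_rpow hwi (hfi h)]
        ring
    _ ≤ a * heightTerm β w f i h + ε * (heightTerm β w f k h + heightTerm β w f l h + 1) := by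
        gcongr
        exact rpow_mul_mul_le_mul_add_add_one hβi hβk hβl hβ (by positivity) (by positivity)
          (heightTerm_nonneg hwk hfk) (heightTerm_nonneg hwl hfl)
          (le_rpow_one_div_rpow (by positivity) hk) (le_rpow_one_div_rpow (by positivity) hl)
          hκ hε hκε

theorem apply_heightTerm_pow_mul_sub_le (A : (H → ℝ) →ₗ[ℝ] (H → ℝ)) {d i j : ℕ} {h : H}
    {a ω ε ρ : ℝ} (hj0 : 0 < j) (hji : j ≤ i) (hijd : i + j ≤ d) (hβi : 0 < β i)
    (hβnn : ∀ k ≤ d, 0 ≤ β k) (hβ : β (i + j) + β (i - j) ≤ 2 * β i)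
    (hf : ∀ k ≤ d, ∀ h, 0 < f k h) (hf1 : ∀ k ≤ d, β k = 0 → ∀ h, f k h = 1)
    (hω : 0 < ω) (hε : 0 ≤ ε) (hρ0 : 0 < ρ) (hρ1 : ρ ≤ 1) (hρε : ρ * ω ^ 4 ≤ ε ^ (2 * β i))
    (hA : A (fun h' => f i h' ^ (1 / β i)) h ≤ a * f i h ^ (1 / β i) +
      ω ^ (2 * (1 / β i)) * √(f (i + j) h * f (i - j) h) ^ (1 / β i)) :
    A (heightTerm β (fun k => ρ ^ (k * (d - k))) f i) h ≤
      a * heightTerm β (fun k => ρ ^ (k * (d - k))) f i h +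
        ε * (heightTerm β (fun k => ρ ^ (k * (d - k))) f (i + j) h +
          heightTerm β (fun k => ρ ^ (k * (d - k))) f (i - j) h + 1) := by
  have hendpoint : ∀ k ≤ d, β k = 0 → ρ ^ (k * (d - k)) * f k h ≤ 1 := fun k hk hβk => by
    rw [hf1 k hk hβk, mul_one]
    exact pow_le_one₀ hρ0.le hρ1
  refine apply_heightTerm_le A (κ := ρ ^ (2 * j ^ 2) * ω ^ 4) hβi (hβnn _ hijd) (hβnn _ (by omega))
    hβ (by positivity) (by positivity) (by positivity) (fun h' => (hf i (by omega) h').le)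
    (hf _ hijd h).le (hf _ (by omega) h).le (hendpoint _ hijd) (hendpoint _ (by omega)) hω.le
    (by positivity) hε ?_ ?_ hA
  · rw [pow_mul_sub_sq ρ hji hijd]
    ring
  · calc ρ ^ (2 * j ^ 2) * ω ^ 4 ≤ ρ * ω ^ 4 := by
          gcongr
          exact pow_le_of_le_one hρ0.le hρ1 (by positivity)
      _ ≤ ε ^ (2 * β i) := hρε

theorem apply_heightTerm_le_add_sum (A : (H → ℝ) →ₗ[ℝ] (H → ℝ)) {d : ℕ} {a ω ε ρ : ℝ}
    (hβ0 : β 0 = 0) (hβd : β d = 0) (hβpos : ∀ i, 0 < i → i < d → 0 < β i)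
    (hβconc : ∀ i j : ℕ, 0 < i → i < d → 0 < j → j ≤ min i (d - i) →
      (β (i - j) + β (i + j)) / 2 ≤ β i)
    (hA1 : A (fun _ => 1) = fun _ => 1) (hfpos : ∀ i, i ≤ d → ∀ h, 0 < f i h)
    (hf0 : f 0 = fun _ => 1) (hfd : f d = fun _ => 1) (ha : 0 < a) (hω : 0 < ω) (hε : 0 < ε)
    (hρ0 : 0 < ρ) (hρ1 : ρ ≤ 1) (hρε : ∀ i ∈ range (d + 1), ρ * ω ^ 4 ≤ ε ^ (2 * β i))
    (havg : ∀ i, 1 ≤ i → i ≤ d - 1 → ∀ h : H,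
      ∃ j, 0 < j ∧ j ≤ min (d - i) i ∧
        A (fun h' => f i h' ^ (1 / β i)) h ≤ a * f i h ^ (1 / β i) +
          ω ^ (2 * (1 / β i)) * √(f (i + j) h * f (i - j) h) ^ (1 / β i))
    {i : ℕ} (hi : i ∈ range (d + 1)) (h : H) :
    A (heightTerm β (fun k => ρ ^ (k * (d - k))) f i) h ≤
      a * heightTerm β (fun k => ρ ^ (k * (d - k))) f i h +
        2 * ε * ∑ k ∈ range (d + 1), heightTerm β (fun k => ρ ^ (k * (d - k))) f k h +
          (1 + ε) := by
  set g := heightTerm β (fun k => ρ ^ (k * (d - k))) f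
  have hg : ∀ k ∈ range (d + 1), 0 ≤ g k h := fun k hk =>
    heightTerm_nonneg (by positivity) (hfpos k (by grind) h).le
  obtain ⟨hi0, hid⟩ | hend : (0 < i ∧ i < d) ∨ (i = 0 ∨ i = d) := by grind
  · have hβnn : ∀ k ≤ d, 0 ≤ β k := fun k hk => by
      obtain rfl | rfl | ⟨hk0, hkd⟩ : k = 0 ∨ k = d ∨ (0 < k ∧ k < d) := by omega
      exacts [hβ0.ge, hβd.ge, (hβpos k hk0 hkd).le]
    have hf1 : ∀ k ≤ d, β k = 0 → ∀ h, f k h = 1 := fun k hk hβk h => by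
      obtain rfl | rfl | ⟨hk0, hkd⟩ : k = 0 ∨ k = d ∨ (0 < k ∧ k < d) := by omega
      exacts [congrFun hf0 h, congrFun hfd h, absurd hβk (hβpos k hk0 hkd).ne']
    have hgF : ∀ k ≤ d, g k h ≤ ∑ k ∈ range (d + 1), g k h := fun k hk =>
      single_le_sum hg (mem_range.2 (Nat.lt_succ_of_le hk))
    obtain ⟨j, hj0, hj, hAj⟩ := havg i hi0 (by omega) h
    have hji : j ≤ i := hj.trans (min_le_right _ _)
    have hijd : i + j ≤ d := by omega
    have := apply_heightTerm_pow_mul_sub_le A hj0 hji hijd (hβpos i hi0 hid) hβnn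
      (by linarith [hβconc i j hi0 hid hj0 (by omega)]) hfpos hf1 hω hε.le hρ0 hρ1 (hρε i hi) hAj
    nlinarith [hgF (i + j) hijd, hgF (i - j) (by omega)]
  · have hβi : β i = 0 := by
      obtain rfl | rfl := hend
      exacts [hβ0, hβd]
    simp only [g, heightTerm_of_eq_zero hβi, hA1]
    nlinarith [sum_nonneg hg]

end HeightFunction

theorem height_function_construction_general
    (d : ℕ) (β : ℕ → ℝ)
    (hβ0 : β 0 = 0) (hβd : β d = 0)
    (hβpos : ∀ i, 0 < i → i < d → 0 < β i)
    (hβconc : ∀ i j : ℕ, 0 < i → i < d → 0 < j → j ≤ min i (d - i) →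
      (β (i - j) + β (i + j)) / 2 ≤ β i)
    (H : Type*) (A : (H → ℝ) →ₗ[ℝ] (H → ℝ))
    (hA1 : A (fun _ => 1) = fun _ => 1)
    (f : ℕ → H → ℝ)
    (hfpos : ∀ i, i ≤ d → ∀ h, 0 < f i h)
    (hf0 : f 0 = fun _ => 1) (hfd : f d = fun _ => 1)
    (a ω : ℝ) (ha : 0 < a) (hω : 0 < ω)
    (havg : ∀ i, 1 ≤ i → i ≤ d - 1 → ∀ h : H,
      ∃ j, 0 < j ∧ j ≤ min (d - i) i ∧
        A (fun h' => f i h' ^ (1 / β i)) h ≤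
          a * f i h ^ (1 / β i) +
            ω ^ (2 * (1 / β i)) *
              (Real.sqrt (f (i + j) h * f (i - j) h)) ^ (1 / β i)) :
    ∀ a' : ℝ, a < a' →
      ∃ (ω' : ℕ → ℝ) (C₀ : ℝ), (∀ i, i ≤ d → 0 < ω' i) ∧ 1 < C₀ ∧
        ∀ h : H,
          A (fun h' => ∑ i ∈ Finset.range (d + 1), (ω' i * f i h') ^ (1 / β i)) h ≤
            a' * (∑ i ∈ Finset.range (d + 1), (ω' i * f i h) ^ (1 / β i)) + C₀ := by
  intro a' haa'
  set ε := (a' - a) / (2 * (d + 1)) with hε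
  have hε0 : 0 < ε := div_pos (by linarith) (by positivity)
  obtain ⟨ρ, hρ0, hρ1, hρε⟩ := exists_pos_le_one_forall_mul_le (range (d + 1)) (ω ^ 4)
    (y := fun i => ε ^ (2 * β i)) fun i _ => by positivity
  refine ⟨fun k => ρ ^ (k * (d - k)), (d + 1) * (1 + ε), fun i _ => by positivity,
    by nlinarith, fun h => ?_⟩
  set g := heightTerm β (fun k => ρ ^ (k * (d - k))) f
  have hsum := sum_le_mul_sum_add (range (d + 1)) (a' := a')
    (fun k hk => heightTerm_nonneg (by positivity) (hfpos k (by grind) h).le)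
    (fun i hi => apply_heightTerm_le_add_sum A hβ0 hβd hβpos hβconc hA1 hfpos hf0 hfd ha hω hε0
      hρ0 hρ1 hρε havg hi h)
    (le_of_eq (by rw [card_range, hε]; push_cast; field_simp))
  rw [card_range] at hsum
  push_cast at hsum
  calc A (fun h' => ∑ i ∈ range (d + 1), g i h') h = ∑ i ∈ range (d + 1), A (g i) h := by
        rw [← Finset.sum_fn, map_sum, Finset.sum_apply]
    _ ≤ _ := hsum

/-- Proposition 4.1 of Kadyrov–Kleinbock–Lindenstrauss–Margulis: let `β : {0,…,d} → ℝ≥0`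
vanish at the endpoints, be positive in between and midpoint-concave, let `A` be a linear
monotone operator on functions `H → ℝ` with `A 1 = 1`, and let `f₀,…,f_d : H → ℝ>0` with
`f₀ = f_d = 1` satisfy the system of integral inequalities
`A(f_i^{β_i}) ≤ a f_i^{β_i} + ω^{2β_i} max_{0<j≤min(d-i,i)} (√(f_{i+j} f_{i-j}))^{β_i}`
(with `β_i = 1/β(i)`).  Then for every `a' > a` there are `ω₀,…,ω_d > 0` and `C₀ > 1`
such that `f := Σ_{i=0}^d (ω_i f_i)^{β_i}` satisfies `A f ≤ a' f + C₀` pointwise. -/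
theorem height_function_construction
    (d : ℕ) (hd : 1 ≤ d) (β : ℕ → ℝ)
    (hβ0 : β 0 = 0) (hβd : β d = 0)
    (hβpos : ∀ i, 0 < i → i < d → 0 < β i)
    (hβconc : ∀ i j : ℕ, 0 < i → i < d → 0 < j → j ≤ min i (d - i) →
      (β (i - j) + β (i + j)) / 2 ≤ β i)
    (H : Type*) (A : (H → ℝ) →ₗ[ℝ] (H → ℝ))
    (hA1 : A (fun _ => 1) = fun _ => 1)
    (hAmono : ∀ f g : H → ℝ, f ≤ g → A f ≤ A g)
    (f : ℕ → H → ℝ)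
    (hfpos : ∀ i, i ≤ d → ∀ h, 0 < f i h)
    (hf0 : f 0 = fun _ => 1) (hfd : f d = fun _ => 1)
    (a ω : ℝ) (ha : 0 < a) (hω : 0 < ω)
    (havg : ∀ i, 1 ≤ i → i ≤ d - 1 → ∀ h : H,
      ∃ j, 0 < j ∧ j ≤ min (d - i) i ∧
        A (fun h' => f i h' ^ (1 / β i)) h ≤
          a * f i h ^ (1 / β i) +
            ω ^ (2 * (1 / β i)) *
              (Real.sqrt (f (i + j) h * f (i - j) h)) ^ (1 / β i)) :
    ∀ a' : ℝ, a < a' →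
      ∃ (ω' : ℕ → ℝ) (C₀ : ℝ), (∀ i, i ≤ d → 0 < ω' i) ∧ 1 < C₀ ∧
        ∀ h : H,
          A (fun h' => ∑ i ∈ Finset.range (d + 1), (ω' i * f i h') ^ (1 / β i)) h ≤
            a' * (∑ i ∈ Finset.range (d + 1), (ω' i * f i h) ^ (1 / β i)) + C₀ :=
  height_function_construction_general d β hβ0 hβd hβpos hβconc H A hA1 f hfpos hf0 hfd a ω ha hω
    havg
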